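/- arXiv:1503.03783 — 5 statements merged into one kernel-verified Lean document; each statement's English description precedes it below -/
import Mathlib

section
/- Let H be a real Hilbert space, K ⊆ H nonempty closed convex, a a bounded symmetric coercive bilinear form on H with coercivity constant c₁ > 0, λ > 0, φ ∈ K, and ℓ ∈ H* a bounded linear functional. Let φ̄ ∈ K satisfy the variational inequality a(φ̄ − φ, η − φ̄) + λ·ℓ(η − φ̄) ≥ 0 for all η ∈ K, and set v := φ̄ − φ. Then ℓ(v) ≤ −(c₁/λ)·‖v‖², i.e. v is a descent direction for any functional whose derivative at φ is ℓ (whenever v ≠ 0). -/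
/-! Testing the variational inequality with `η = φ` turns it into
`λ ℓ(v) + a(v, v) ≤ 0`, and coercivity bounds `a(v, v)` below by `c₁ ‖v‖²`. -/

theorem mul_apply_add_apply_self_nonpos_of_variational_inequality {E : Type*} [AddCommGroup E]
    [Module ℝ E] {F : Type*} [FunLike F E ℝ] [LinearMapClass F ℝ E ℝ]
    {a : E →ₗ[ℝ] E →ₗ[ℝ] ℝ} {ℓ : F} {lam : ℝ} {φ φbar : E}
    (h : 0 ≤ a (φbar - φ) (φ - φbar) + lam * ℓ (φ - φbar)) :
    lam * ℓ (φbar - φ) + a (φbar - φ) (φbar - φ) ≤ 0 := by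
  rw [← neg_sub φbar φ, map_neg, map_neg, mul_neg] at h
  linarith

theorem stmt_1_general {H : Type*} [NormedAddCommGroup H] [InnerProductSpace ℝ H]
    (K : Set H)
    (a : H →ₗ[ℝ] H →ₗ[ℝ] ℝ)
    (c₁ : ℝ) (hcoer : ∀ p, c₁ * ‖p‖ ^ 2 ≤ a p p)
    (lam : ℝ) (hlam : 0 < lam)
    (φ : H) (hφ : φ ∈ K) (ℓ : H →L[ℝ] ℝ)
    (φbar : H)
    (hVI : ∀ η ∈ K, 0 ≤ a (φbar - φ) (η - φbar) + lam * ℓ (η - φbar))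
    (v : H) (hv : v = φbar - φ) :
    ℓ v ≤ -(c₁ / lam) * ‖v‖ ^ 2 := by
  subst hv
  have hdescent := mul_apply_add_apply_self_nonpos_of_variational_inequality (hVI φ hφ)
  rw [neg_mul, div_mul_eq_mul_div, le_neg, div_le_iff₀ hlam]
  linarith [hcoer (φbar - φ)]

/-- If `φ̄ ∈ K` satisfies the variational inequality
`a(φ̄ − φ, η − φ̄) + λ·ℓ(η − φ̄) ≥ 0` for all `η ∈ K`, then `v := φ̄ − φ` satisfies
`ℓ(v) ≤ −(c₁/λ)·‖v‖²`, i.e. `v` is a descent direction. -/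
theorem stmt_1 {H : Type*} [NormedAddCommGroup H] [InnerProductSpace ℝ H] [CompleteSpace H]
    (K : Set H) (hKne : K.Nonempty) (hKcl : IsClosed K) (hKcv : Convex ℝ K)
    (a : H →ₗ[ℝ] H →ₗ[ℝ] ℝ) (hsym : ∀ p y, a p y = a y p)
    (C : ℝ) (hbdd : ∀ p y, |a p y| ≤ C * ‖p‖ * ‖y‖)
    (c₁ : ℝ) (hc₁ : 0 < c₁) (hcoer : ∀ p, c₁ * ‖p‖ ^ 2 ≤ a p p)
    (lam : ℝ) (hlam : 0 < lam)
    (φ : H) (hφ : φ ∈ K) (ℓ : H →L[ℝ] ℝ)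
    (φbar : H) (hφbar : φbar ∈ K)
    (hVI : ∀ η ∈ K, 0 ≤ a (φbar - φ) (η - φbar) + lam * ℓ (η - φbar))
    (v : H) (hv : v = φbar - φ) :
    ℓ v ≤ -(c₁ / lam) * ‖v‖ ^ 2 :=
  stmt_1_general K a c₁ hcoer lam hlam φ hφ ℓ φbar hVI v hv
end

section
/- Let {x_k} and {α_k} be real sequences with x_k ≥ 0, α_k ≥ 0, α_k → 0, x_k·α_k → 0, and suppose there exist c > 0 and 0 < γ ≤ 1 such that x_k ≤ c·(x_k^{(1+γ)/2}·α_k^γ + α_k^γ) for all k. Then x_k → 0. -/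
open Filter Topology

/-!
Split `x^{(1+γ)/2} α^γ = (x α)^γ · x^{(1-γ)/2}` and bound `x^{(1-γ)/2} ≤ 1 + x` (Bernoulli).
The hypothesis becomes `x ≤ ε (1 + x) + c α^γ` with `ε = c (x α)^γ → 0`; once `ε ≤ 1/2` the
`x` on the right can be absorbed, leaving `x ≤ 2 (ε + c α^γ) → 0`.
-/

theorem Real.rpow_le_one_add_self {x p : ℝ} (hx : 0 ≤ x) (hp0 : 0 ≤ p) (hp1 : p ≤ 1) :
    x ^ p ≤ 1 + x := by
  have h := rpow_one_add_le_one_add_mul_self (s := x - 1) (by linarith) hp0 hp1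
  rw [add_sub_cancel] at h
  nlinarith [mul_le_mul_of_nonneg_right hp1 hx]

theorem Real.rpow_one_add_half_mul_rpow_le {x a γ : ℝ} (hx : 0 ≤ x) (ha : 0 ≤ a)
    (hγ0 : 0 ≤ γ) (hγ1 : γ ≤ 1) :
    x ^ ((1 + γ) / 2) * a ^ γ ≤ (x * a) ^ γ * (1 + x) := by
  have hsplit : x ^ ((1 + γ) / 2) = x ^ γ * x ^ ((1 - γ) / 2) := by
    rw [← Real.rpow_add' hx (by linarith)]
    ring_nf
  rw [hsplit, Real.mul_rpow hx ha, mul_right_comm]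
  gcongr
  exact Real.rpow_le_one_add_self hx (by linarith) (by linarith)

theorem tendsto_zero_of_le_mul_one_add_add {ι : Type*} {l : Filter ι} {x ε b : ι → ℝ}
    (hx : ∀ᶠ i in l, 0 ≤ x i) (hε : Tendsto ε l (𝓝 0)) (hb : Tendsto b l (𝓝 0))
    (h : ∀ᶠ i in l, x i ≤ ε i * (1 + x i) + b i) : Tendsto x l (𝓝 0) := by
  have hε_small : ∀ᶠ i in l, ε i ≤ 1 / 2 := hε.eventually (eventually_le_nhds (by norm_num))
  have habsorb : ∀ᶠ i in l, x i ≤ 2 * (ε i + b i) := by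
    filter_upwards [hx, hε_small, h] with i hxi hεi hi
    nlinarith
  have hbound : Tendsto (fun i => 2 * (ε i + b i)) l (𝓝 0) := by
    simpa using (hε.add hb).const_mul 2
  exact squeeze_zero' hx habsorb hbound

/-- bootstrap lemma. If `x_k ≥ 0`, `α_k ≥ 0`, `α_k → 0`, `x_k·α_k → 0` and
`x_k ≤ c (x_k^{(1+γ)/2} α_k^γ + α_k^γ)` for some `c > 0`, `0 < γ ≤ 1`, then `x_k → 0`. -/
theorem stmt_4 (x α : ℕ → ℝ) (hx : ∀ k, 0 ≤ x k) (hα : ∀ k, 0 ≤ α k)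
    (hαto0 : Tendsto α atTop (𝓝 0)) (hxαto0 : Tendsto (fun k => x k * α k) atTop (𝓝 0))
    (c γ : ℝ) (hc : 0 < c) (hγ : 0 < γ) (hγ1 : γ ≤ 1)
    (hineq : ∀ k, x k ≤ c * (x k ^ ((1 + γ) / 2) * α k ^ γ + α k ^ γ)) :
    Tendsto x atTop (𝓝 0) := by
  have hε : Tendsto (fun k => c * (x k * α k) ^ γ) atTop (𝓝 0) := by
    simpa using (hxαto0.rpow_const_nhds_zero hγ).const_mul c
  have hb : Tendsto (fun k => c * α k ^ γ) atTop (𝓝 0) := by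
    simpa using (hαto0.rpow_const_nhds_zero hγ).const_mul c
  refine tendsto_zero_of_le_mul_one_add_add (.of_forall hx) hε hb (.of_forall fun k => ?_)
  calc x k ≤ c * (x k ^ ((1 + γ) / 2) * α k ^ γ + α k ^ γ) := hineq k
    _ ≤ c * ((x k * α k) ^ γ * (1 + x k) + α k ^ γ) := by
      gcongr c * (?_ + _)
      exact Real.rpow_one_add_half_mul_rpow_le (hx k) (hα k) hγ.le hγ1
    _ = c * (x k * α k) ^ γ * (1 + x k) + c * α k ^ γ := by ring
end

section
/- Let H be a real Hilbert space, K ⊆ H nonempty closed convex, a a bounded symmetric coercive bilinear form with constants 0 < c₁ ≤ c₂ (c₁‖p‖² ≤ a(p,p) ≤ c₂‖p‖²), and λ > 0. For φ ∈ K let P(φ) be the unique solution of min_{y∈K} (1/2)a(y−φ,y−φ) + λℓ(φ)(y−φ), where ℓ : K → H* is Lipschitz with constant L. Then the map φ ↦ P(φ) satisfies ‖P(φ₁) − P(φ₂)‖ ≤ ((c₂ + λL)/c₁)‖φ₁ − φ₂‖; in particular P is Lipschitz continuous on K. -/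
/-!
Testing the variational inequality of `P φ₁` with `η = P φ₂` and that of `P φ₂` with
`η = P φ₁` and adding them gives, for `u = P φ₁ - P φ₂` and `d = φ₁ - φ₂`,
`a(u, u) ≤ a(d, u) + λ (ℓ φ₂ - ℓ φ₁)(u)`.
Coercivity bounds the left side below by `c₁‖u‖²`; Cauchy–Schwarz for `a` and the Lipschitz
bound on `ℓ` bound the right side by `(c₂ + λL)‖d‖‖u‖`. Dividing by `‖u‖` concludes.
-/

namespace LinearMap.BilinForm

theorem apply_sub_self_le_of_variational_ineq {M : Type*} [AddCommGroup M] [Module ℝ M]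
    (a : LinearMap.BilinForm ℝ M) (lam : ℝ) (f₁ f₂ : M →ₗ[ℝ] ℝ) {x₁ x₂ p₁ p₂ : M}
    (h₁ : 0 ≤ a (p₁ - x₁) (p₂ - p₁) + lam * f₁ (p₂ - p₁))
    (h₂ : 0 ≤ a (p₂ - x₂) (p₁ - p₂) + lam * f₂ (p₁ - p₂)) :
    a (p₁ - p₂) (p₁ - p₂) ≤ a (x₁ - x₂) (p₁ - p₂) + lam * (f₂ - f₁) (p₁ - p₂) := by
  simp only [map_sub, LinearMap.sub_apply] at h₁ h₂ ⊢
  linarith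

theorem apply_le_mul_norm_mul_norm {H : Type*} [SeminormedAddCommGroup H] [NormedSpace ℝ H]
    (a : LinearMap.BilinForm ℝ H) (hsym : ∀ p y, a p y = a y p)
    (hpos : ∀ p, 0 ≤ a p p) {c : ℝ} (hc : 0 ≤ c) (hbdd : ∀ p, a p p ≤ c * ‖p‖ ^ 2)
    (w u : H) : a w u ≤ c * ‖w‖ * ‖u‖ := by
  have hsq : a w u ^ 2 ≤ (c * ‖w‖ * ‖u‖) ^ 2 :=
    calc a w u ^ 2 ≤ a w w * a u u := by
          simpa only [sq, hsym u w] using apply_mul_apply_le_of_forall_zero_le a hpos w u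
      _ ≤ (c * ‖w‖ ^ 2) * (c * ‖u‖ ^ 2) := mul_le_mul (hbdd w) (hbdd u) (hpos u) (by positivity)
      _ = (c * ‖w‖ * ‖u‖) ^ 2 := by ring
  exact (abs_le_of_sq_le_sq' hsq (by positivity)).2

end LinearMap.BilinForm

theorem le_div_of_mul_sq_le_mul {c B x : ℝ} (hc : 0 < c) (hB : 0 ≤ B) (h : c * x ^ 2 ≤ B * x) :
    x ≤ B / c := by
  rw [le_div_iff₀ hc]
  nlinarith

theorem stmt_13_general {H : Type*} [NormedAddCommGroup H] [InnerProductSpace ℝ H]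
    (K : Set H)
    (a : H →ₗ[ℝ] H →ₗ[ℝ] ℝ) (hsym : ∀ p y, a p y = a y p)
    (c₁ c₂ : ℝ) (hc₁ : 0 < c₁) (hc₁₂ : c₁ ≤ c₂)
    (hcoer : ∀ p, c₁ * ‖p‖ ^ 2 ≤ a p p) (hbdd : ∀ p, a p p ≤ c₂ * ‖p‖ ^ 2)
    (lam : ℝ) (hlam : 0 < lam)
    (ℓ : H → (H →L[ℝ] ℝ)) (L : ℝ) (hL : 0 ≤ L)
    (hLip : ∀ φ₁ ∈ K, ∀ φ₂ ∈ K, ‖ℓ φ₁ - ℓ φ₂‖ ≤ L * ‖φ₁ - φ₂‖)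
    (P : H → H) (hPK : ∀ φ ∈ K, P φ ∈ K)
    (hVI : ∀ φ ∈ K, ∀ η ∈ K, 0 ≤ a (P φ - φ) (η - P φ) + lam * ℓ φ (η - P φ)) :
    ∀ φ₁ ∈ K, ∀ φ₂ ∈ K, ‖P φ₁ - P φ₂‖ ≤ ((c₂ + lam * L) / c₁) * ‖φ₁ - φ₂‖ := by
  intro φ₁ h₁ φ₂ h₂
  set u := P φ₁ - P φ₂
  set d := φ₁ - φ₂
  have hc₂ : 0 ≤ c₂ := hc₁.le.trans hc₁₂
  have hpos : ∀ p, 0 ≤ a p p := fun p => (by positivity : 0 ≤ c₁ * ‖p‖ ^ 2).trans (hcoer p)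
  have hsum := LinearMap.BilinForm.apply_sub_self_le_of_variational_ineq a lam (ℓ φ₁) (ℓ φ₂)
    (hVI φ₁ h₁ (P φ₂) (hPK φ₂ h₂)) (hVI φ₂ h₂ (P φ₁) (hPK φ₁ h₁))
  have ha : a d u ≤ c₂ * ‖d‖ * ‖u‖ :=
    LinearMap.BilinForm.apply_le_mul_norm_mul_norm a hsym hpos hc₂ hbdd d u
  have hℓ : (ℓ φ₂ - ℓ φ₁) u ≤ L * ‖d‖ * ‖u‖ :=
    calc (ℓ φ₂ - ℓ φ₁) u ≤ ‖ℓ φ₂ - ℓ φ₁‖ * ‖u‖ :=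
          (le_abs_self _).trans ((ℓ φ₂ - ℓ φ₁).le_opNorm u)
      _ ≤ L * ‖d‖ * ‖u‖ := by
        gcongr
        simpa only [norm_sub_rev] using hLip φ₂ h₂ φ₁ h₁
  have hmain : c₁ * ‖u‖ ^ 2 ≤ (c₂ + lam * L) * ‖d‖ * ‖u‖ :=
    calc c₁ * ‖u‖ ^ 2 ≤ a u u := hcoer u
      _ ≤ a d u + lam * (ℓ φ₂ - ℓ φ₁) u := hsum
      _ ≤ c₂ * ‖d‖ * ‖u‖ + lam * (L * ‖d‖ * ‖u‖) := by gcongr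
      _ = (c₂ + lam * L) * ‖d‖ * ‖u‖ := by ring
  rw [div_mul_eq_mul_div]
  exact le_div_of_mul_sq_le_mul hc₁ (by positivity) hmain

/-- Lipschitz continuity of the projection-type map `P`: if `P φ` is
characterized by the variational inequality
`a(Pφ − φ, η − Pφ) + λ ℓ(φ)(η − Pφ) ≥ 0` for all `η ∈ K`, with `a` symmetric,
`c₁‖p‖² ≤ a(p,p) ≤ c₂‖p‖²` and `ℓ : K → H*` Lipschitz with constant `L`, then
`‖P φ₁ − P φ₂‖ ≤ ((c₂ + λL)/c₁)‖φ₁ − φ₂‖`. -/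
theorem stmt_13 {H : Type*} [NormedAddCommGroup H] [InnerProductSpace ℝ H] [CompleteSpace H]
    (K : Set H) (hKne : K.Nonempty) (hKcl : IsClosed K) (hKcv : Convex ℝ K)
    (a : H →ₗ[ℝ] H →ₗ[ℝ] ℝ) (hsym : ∀ p y, a p y = a y p)
    (c₁ c₂ : ℝ) (hc₁ : 0 < c₁) (hc₁₂ : c₁ ≤ c₂)
    (hcoer : ∀ p, c₁ * ‖p‖ ^ 2 ≤ a p p) (hbdd : ∀ p, a p p ≤ c₂ * ‖p‖ ^ 2)
    (lam : ℝ) (hlam : 0 < lam)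
    (ℓ : H → (H →L[ℝ] ℝ)) (L : ℝ) (hL : 0 ≤ L)
    (hLip : ∀ φ₁ ∈ K, ∀ φ₂ ∈ K, ‖ℓ φ₁ - ℓ φ₂‖ ≤ L * ‖φ₁ - φ₂‖)
    (P : H → H) (hPK : ∀ φ ∈ K, P φ ∈ K)
    (hVI : ∀ φ ∈ K, ∀ η ∈ K, 0 ≤ a (P φ - φ) (η - P φ) + lam * ℓ φ (η - P φ)) :
    ∀ φ₁ ∈ K, ∀ φ₂ ∈ K, ‖P φ₁ - P φ₂‖ ≤ ((c₂ + lam * L) / c₁) * ‖φ₁ - φ₂‖ :=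
  stmt_13_general K a hsym c₁ c₂ hc₁ hc₁₂ hcoer hbdd lam hlam ℓ L hL hLip P hPK hVI
end

section
/- Let X be a real Banach space, j : X → ℝ Fréchet differentiable with j' Hölder continuous with exponent γ ∈ (0,1] and modulus L on a convex set containing all iterates, and suppose along a sequence the Armijo condition fails at step size α_k/β, i.e. σ(α_k/β)j'(φ_k)(v_k) < j(φ_k + (α_k/β)v_k) − j(φ_k), with j'(φ_k)(v_k) ≤ −c‖v_k‖² for some c > 0 and ‖v_k‖ ≤ M. If α_k → 0, then j'(φ_k)(v_k) → 0 and hence ‖v_k‖ → 0. -/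
/-!
On the segment from `φ_k` to the rejected trial point `φ_k + (α_k/β) v_k`, the mean value
inequality and the Hölder continuity of `j'` give the descent estimate
`j(u + w) - j(u) ≤ j'(u)(w) + L‖w‖^(1+γ)`. Combined with the failure of the Armijo condition
this yields `(1 - σ)|j'(φ_k)(v_k)| ≤ L (α_k/β)^γ ‖v_k‖^(1+γ)`, and the right-hand side tends to
zero because the directions are bounded and `α_k → 0`. The descent condition
`c‖v_k‖² ≤ -j'(φ_k)(v_k)` then forces `‖v_k‖ → 0`.
-/

open Filter Topology

section HolderDescent

variable {X : Type*} [NormedAddCommGroup X] [NormedSpace ℝ X]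
  {S : Set X} {j : X → ℝ} {j' : X → (X →L[ℝ] ℝ)} {γ L : ℝ}

theorem Convex.abs_image_sub_sub_fderiv_le_of_holder (hS : Convex ℝ S)
    (hdiff : ∀ u ∈ S, HasFDerivWithinAt j (j' u) S u)
    (hγ : 0 ≤ γ) (hL : 0 ≤ L)
    (hHolder : ∀ u ∈ S, ∀ w ∈ S, ‖j' u - j' w‖ ≤ L * ‖u - w‖ ^ γ)
    {u w : X} (hu : u ∈ S) (huw : u + w ∈ S) :
    |j (u + w) - j u - j' u w| ≤ L * ‖w‖ ^ γ * ‖w‖ := by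
  have hseg : segment ℝ u (u + w) ⊆ S := hS.segment_subset hu huw
  have hderiv : ∀ x ∈ segment ℝ u (u + w), HasFDerivWithinAt (fun x => j x - j' u x)
      (j' x - j' u) (segment ℝ u (u + w)) x := fun x hx =>
    ((hdiff x (hseg hx)).mono hseg).sub (j' u).hasFDerivAt.hasFDerivWithinAt
  have hbound : ∀ x ∈ segment ℝ u (u + w), ‖j' x - j' u‖ ≤ L * ‖w‖ ^ γ := by
    intro x hx
    have hxu : ‖x - u‖ ≤ ‖w‖ := by
      have := dist_add_dist_of_mem_segment hx
      rw [dist_comm u x, dist_comm u, dist_eq_norm, dist_eq_norm, dist_eq_norm,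
        add_sub_cancel_left] at this
      linarith [norm_nonneg (x - (u + w))]
    exact (hHolder x (hseg hx) u hu).trans (by gcongr)
  have hmv := (convex_segment u (u + w)).norm_image_sub_le_of_norm_hasFDerivWithin_le
    hderiv hbound (left_mem_segment ℝ u (u + w)) (right_mem_segment ℝ u (u + w))
  rw [add_sub_cancel_left, Real.norm_eq_abs, map_add] at hmv
  convert hmv using 2
  ring

theorem Convex.neg_fderiv_le_of_not_armijo (hS : Convex ℝ S)
    (hdiff : ∀ u ∈ S, HasFDerivWithinAt j (j' u) S u)
    (hγ : 0 ≤ γ) (hL : 0 ≤ L)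
    (hHolder : ∀ u ∈ S, ∀ w ∈ S, ‖j' u - j' w‖ ≤ L * ‖u - w‖ ^ γ)
    {σ t : ℝ} (hσ1 : σ < 1) (ht : 0 < t) {u v : X} (hu : u ∈ S) (hstep : u + t • v ∈ S)
    (hfail : σ * t * j' u v < j (u + t • v) - j u) :
    -j' u v ≤ L * t ^ γ * (‖v‖ ^ γ * ‖v‖) / (1 - σ) := by
  have hdescent := le_of_abs_le
    (hS.abs_image_sub_sub_fderiv_le_of_holder hdiff hγ hL hHolder hu hstep)
  rw [map_smul, smul_eq_mul, norm_smul, Real.norm_of_nonneg ht.le,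
    Real.mul_rpow ht.le (norm_nonneg v)] at hdescent
  have hrejected : t * ((1 - σ) * -j' u v) < t * (L * t ^ γ * (‖v‖ ^ γ * ‖v‖)) := by
    linarith
  rw [le_div_iff₀ (sub_pos.2 hσ1), mul_comm]
  exact (lt_of_mul_lt_mul_left hrejected ht.le).le

end HolderDescent

theorem tendsto_norm_zero_of_mul_sq_le {ι X : Type*} [SeminormedAddCommGroup X] {l : Filter ι}
    {v : ι → X} {d : ι → ℝ} {c : ℝ} (hc : 0 < c) (hd : Tendsto d l (𝓝 0))
    (hdesc : ∀ i, d i ≤ -c * ‖v i‖ ^ 2) :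
    Tendsto (fun i => ‖v i‖) l (𝓝 0) := by
  have hsq : Tendsto (fun i => ‖v i‖ ^ 2) l (𝓝 0) := by
    refine squeeze_zero (fun i => by positivity) (fun i => ?_) (by simpa using hd.neg.div_const c)
    rw [le_div_iff₀ hc]
    linarith [hdesc i]
  simpa [Real.sqrt_sq (norm_nonneg _)] using hsq.sqrt

theorem stmt_16_general {X : Type*} [NormedAddCommGroup X] [NormedSpace ℝ X]
    (S : Set X) (hS : Convex ℝ S)
    (j : X → ℝ) (j' : X → (X →L[ℝ] ℝ))
    (hdiff : ∀ u ∈ S, HasFDerivWithinAt j (j' u) S u)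
    (γ L : ℝ) (hγ : 0 < γ) (hL : 0 ≤ L)
    (hHolder : ∀ u ∈ S, ∀ w ∈ S, ‖j' u - j' w‖ ≤ L * ‖u - w‖ ^ γ)
    (σ β : ℝ) (hσ1 : σ < 1) (hβ : 0 < β)
    (φ v : ℕ → X) (α : ℕ → ℝ) (hα : ∀ k, 0 < α k)
    (hiterS : ∀ k, φ k ∈ S) (hstepS : ∀ k, φ k + (α k / β) • v k ∈ S)
    (hfail : ∀ k, σ * (α k / β) * j' (φ k) (v k) <
      j (φ k + (α k / β) • v k) - j (φ k))
    (c : ℝ) (hc : 0 < c) (hdesc : ∀ k, j' (φ k) (v k) ≤ -c * ‖v k‖ ^ 2)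
    (M : ℝ) (hM : ∀ k, ‖v k‖ ≤ M)
    (hαto0 : Tendsto α atTop (𝓝 0)) :
    Tendsto (fun k => j' (φ k) (v k)) atTop (𝓝 0) ∧
    Tendsto (fun k => ‖v k‖) atTop (𝓝 0) := by
  have hM0 : 0 ≤ M := (norm_nonneg _).trans (hM 0)
  set C := L * (M ^ γ * M) / (1 - σ)
  have hnonneg : ∀ k, 0 ≤ -j' (φ k) (v k) := fun k => by
    nlinarith [hdesc k, sq_nonneg ‖v k‖]
  have hbound : ∀ k, -j' (φ k) (v k) ≤ C * (α k / β) ^ γ := fun k => by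
    have hvM : ‖v k‖ ^ γ * ‖v k‖ ≤ M ^ γ * M := by gcongr <;> exact hM k
    calc -j' (φ k) (v k)
        ≤ L * (α k / β) ^ γ * (‖v k‖ ^ γ * ‖v k‖) / (1 - σ) :=
          hS.neg_fderiv_le_of_not_armijo hdiff hγ.le hL hHolder hσ1 (div_pos (hα k) hβ)
            (hiterS k) (hstepS k) (hfail k)
      _ ≤ L * (α k / β) ^ γ * (M ^ γ * M) / (1 - σ) := by
          have hαk : 0 ≤ α k := (hα k).le
          gcongr
      _ = C * (α k / β) ^ γ := by ring
  have hC : Tendsto (fun k => C * (α k / β) ^ γ) atTop (𝓝 0) := by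
    simpa [Real.zero_rpow hγ.ne'] using
      ((hαto0.div_const β).rpow_const (Or.inr hγ.le)).const_mul C
  have hderiv : Tendsto (fun k => j' (φ k) (v k)) atTop (𝓝 0) := by
    simpa using (squeeze_zero hnonneg hbound hC).neg
  exact ⟨hderiv, tendsto_norm_zero_of_mul_sq_le hc hderiv hdesc⟩

/-- if `j ∈ C^{1,γ}` on a convex set containing the iterates, the Armijo
condition fails at step size `α_k/β`, the directions satisfy the descent estimate
`j'(φ_k)(v_k) ≤ −c‖v_k‖²` and are bounded, and `α_k → 0`, then `j'(φ_k)(v_k) → 0` and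
`‖v_k‖ → 0`. -/
theorem stmt_16 {X : Type*} [NormedAddCommGroup X] [NormedSpace ℝ X] [CompleteSpace X]
    (S : Set X) (hS : Convex ℝ S)
    (j : X → ℝ) (j' : X → (X →L[ℝ] ℝ))
    (hdiff : ∀ u ∈ S, HasFDerivWithinAt j (j' u) S u)
    (γ L : ℝ) (hγ : 0 < γ) (hγ1 : γ ≤ 1) (hL : 0 ≤ L)
    (hHolder : ∀ u ∈ S, ∀ w ∈ S, ‖j' u - j' w‖ ≤ L * ‖u - w‖ ^ γ)
    (σ β : ℝ) (hσ : 0 < σ) (hσ1 : σ < 1) (hβ : 0 < β) (hβ1 : β < 1)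
    (φ v : ℕ → X) (α : ℕ → ℝ) (hα : ∀ k, 0 < α k)
    (hiterS : ∀ k, φ k ∈ S) (hstepS : ∀ k, φ k + (α k / β) • v k ∈ S)
    (hfail : ∀ k, σ * (α k / β) * j' (φ k) (v k) <
      j (φ k + (α k / β) • v k) - j (φ k))
    (c : ℝ) (hc : 0 < c) (hdesc : ∀ k, j' (φ k) (v k) ≤ -c * ‖v k‖ ^ 2)
    (M : ℝ) (hM : ∀ k, ‖v k‖ ≤ M)
    (hαto0 : Tendsto α atTop (𝓝 0)) :
    Tendsto (fun k => j' (φ k) (v k)) atTop (𝓝 0) ∧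
    Tendsto (fun k => ‖v k‖) atTop (𝓝 0) :=
  stmt_16_general S hS j j' hdiff γ L hγ hL hHolder σ β hσ1 hβ φ v α hα hiterS hstepS hfail c hc
    hdesc M hM hαto0
end

section
/- Let H be a real Hilbert space, K ⊆ H nonempty closed convex, j : H → ℝ continuously Fréchet differentiable and bounded below on K, with j' Lipschitz on K. Let {a_k} be symmetric bilinear forms with c₁‖p‖² ≤ a_k(p,p) ≤ c₂‖p‖² (constants independent of k), λ_k ∈ [λ_min, λ_max] ⊆ (0,∞), and let φ_{k+1} = φ_k + α_k v_k be generated by the projected gradient method with v_k = P_k(φ_k) − φ_k (P_k the a_k-projection-type step) and Armijo backtracking with parameters σ, β ∈ (0,1). Then every accumulation point of {φ_k} in the norm topology of H is a stationary point of j on K. -/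
/-!
Testing the minimality of the projection-type step `φbar_k` against `y = φ_k` shows that
`v_k = φbar_k - φ_k` is a descent direction, `j'(φ_k) v_k ≤ -c ‖v_k‖²` with `c = c₁ / (2 λ_max)`,
while varying it along segments in `K` gives the first-order condition
`a_k(v_k, η - φbar_k) + λ_k j'(φ_k)(η - φbar_k) ≥ 0` for `η ∈ K`.
Since `j'` is `L`-Lipschitz on `K`, `j(φ + t v) ≤ j(φ) + t j'(φ) v + L t² ‖v‖²`, so the Armijo
test cannot fail at any `t < (1 - σ) c / L`; the step sizes `α_k` are thus bounded below by a
uniform `τ > 0`. As `j` is bounded below on `K`, the Armijo decrease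
`j(φ_{k+1}) ≤ j(φ_k) - τ σ c ‖v_k‖²` forces `v_k → 0` along the whole sequence. Finally, along a
subsequence `φ_{ψ i} → x`, Cauchy–Schwarz for `a_k` and `λ_k ≥ λ_min` turn the first-order
condition into `j'(φ_{ψ i})(η - φbar_{ψ i}) ≥ -(c₂ / λ_min) ‖v_{ψ i}‖ ‖η - φbar_{ψ i}‖`, whose
limit is `j'(x)(η - x) ≥ 0`.
-/

open Filter Topology Set

theorem nonneg_of_forall_mul_add_mul_sq_nonneg {s q : ℝ}
    (h : ∀ t ∈ Ioc (0 : ℝ) 1, 0 ≤ s * t + q * t ^ 2) : 0 ≤ s := by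
  have hlim : Tendsto (fun t => s + q * t) (𝓝[>] 0) (𝓝 s) :=
    ((continuous_const.add (continuous_const.mul continuous_id)).tendsto' 0 s
      (by simp)).mono_left nhdsWithin_le_nhds
  refine ge_of_tendsto hlim (eventually_of_mem (Ioc_mem_nhdsGT one_pos) fun t ht => ?_)
  have : 0 ≤ t * (s + q * t) := by linarith [h t ht]
  exact nonneg_of_mul_nonneg_right this ht.1

theorem tendsto_zero_of_le_sub_of_bddBelow {u e : ℕ → ℝ} (he : ∀ k, 0 ≤ e k)
    (hu : ∀ k, u (k + 1) ≤ u k - e k) (hbdd : BddBelow (range u)) :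
    Tendsto e atTop (𝓝 0) := by
  have hanti : Antitone u := antitone_nat_of_succ_le fun k => (hu k).trans (sub_le_self _ (he k))
  have hlim := tendsto_atTop_ciInf hanti hbdd
  have hgap : Tendsto (fun k => u k - u (k + 1)) atTop (𝓝 0) := by
    simpa using hlim.sub (hlim.comp (tendsto_add_atTop_nat 1))
  exact squeeze_zero he (fun k => by linarith [hu k]) hgap

theorem tendsto_zero_of_armijo_decrease {u d w α : ℕ → ℝ} {c τ σ : ℝ} (hc : 0 < c)
    (hτ : 0 < τ) (hσ : 0 < σ) (hw : ∀ k, 0 ≤ w k) (hbdd : BddBelow (range u))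
    (hd : ∀ k, d k ≤ -(c * w k ^ 2)) (hα : ∀ k, τ ≤ α k)
    (hu : ∀ k, u (k + 1) ≤ u k + α k * σ * d k) :
    Tendsto w atTop (𝓝 0) := by
  have hdecr : ∀ k, u (k + 1) ≤ u k - τ * σ * c * w k ^ 2 := fun k => by
    have hαd : α k * σ * d k ≤ α k * σ * -(c * w k ^ 2) :=
      mul_le_mul_of_nonneg_left (hd k) (by nlinarith [hα k])
    have hτα : α k * σ * -(c * w k ^ 2) ≤ τ * σ * -(c * w k ^ 2) :=
      mul_le_mul_of_nonpos_right (mul_le_mul_of_nonneg_right (hα k) hσ.le)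
        (neg_nonpos.2 (by positivity))
    linarith [hu k]
  have hsq := (tendsto_zero_of_le_sub_of_bddBelow (fun k => by positivity) hdecr hbdd).const_mul
    (τ * σ * c)⁻¹
  rw [mul_zero] at hsq
  have hsqrt := (Real.continuous_sqrt.tendsto 0).comp hsq
  rw [Real.sqrt_zero] at hsqrt
  exact hsqrt.congr fun k => by
    rw [Function.comp_apply, inv_mul_cancel_left₀ (by positivity), Real.sqrt_sq (hw k)]

theorem min_le_pow_of_armijo {f : ℝ → ℝ} {f₀ d V c L σ β : ℝ} {m : ℕ} (hV : 0 ≤ V)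
    (hL : 0 < L) (hσ1 : σ < 1) (hβ : 0 < β) (hβ1 : β < 1) (hd : d ≤ -(c * V))
    (hquad : ∀ t ∈ Ioc (0 : ℝ) 1, f t ≤ f₀ + t * d + L * t ^ 2 * V)
    (hmin : ∀ n < m, ¬ f (β ^ n) ≤ f₀ + β ^ n * σ * d) :
    min 1 (β * ((1 - σ) * c) / L) ≤ β ^ m := by
  rcases m with _ | n
  · simp
  set t := β ^ n with ht
  have ht0 : 0 < t := pow_pos hβ n
  have hfail := not_le.1 (hmin n n.lt_succ_self)
  have hq := hquad t ⟨ht0, pow_le_one₀ hβ.le hβ1.le⟩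
  have hlin : t * σ * d < t * d + L * t ^ 2 * V := by rw [← ht] at hfail; linarith
  have hdc : (1 - σ) * (c * V) ≤ (1 - σ) * -d :=
    mul_le_mul_of_nonneg_left (by linarith) (by linarith)
  have hgap : t * ((1 - σ) * c * V) < t * (L * t * V) := by
    nlinarith [mul_le_mul_of_nonneg_left hdc ht0.le]
  have hgap' := lt_of_mul_lt_mul_left hgap ht0.le
  have hc : (1 - σ) * c < L * t := lt_of_mul_lt_mul_right hgap' hV
  refine (min_le_right _ _).trans ?_
  rw [pow_succ, div_le_iff₀ hL]
  nlinarith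

section

variable {E : Type*} [NormedAddCommGroup E] [NormedSpace ℝ E] {K : Set E} {f : E → ℝ}
  {f' : E → E →L[ℝ] ℝ} {L : ℝ}

theorem Convex.sub_sub_apply_le_of_lipschitzOn (hK : Convex ℝ K)
    (hf : ∀ x ∈ K, HasFDerivWithinAt f (f' x) K x) (hL : 0 ≤ L)
    (hLip : ∀ x ∈ K, ∀ y ∈ K, ‖f' x - f' y‖ ≤ L * ‖x - y‖) {x y : E} (hx : x ∈ K) (hy : y ∈ K) :
    f y - f x - f' x (y - x) ≤ L * ‖y - x‖ ^ 2 := by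
  have hseg : segment ℝ x y ⊆ K := hK.segment_subset hx hy
  have hbound : ∀ z ∈ segment ℝ x y, ‖f' z - f' x‖ ≤ L * ‖y - x‖ := by
    intro z hz
    have hzx : ‖z - x‖ ≤ ‖y - x‖ := by
      simpa [dist_eq_norm, norm_sub_rev y x] using segment_subset_closedBall_left x y hz
    exact (hLip z (hseg hz) x hx).trans (mul_le_mul_of_nonneg_left hzx hL)
  have hmvt := (convex_segment x y).norm_image_sub_le_of_norm_hasFDerivWithin_le'
    (fun z hz => (hf z (hseg hz)).mono hseg) hbound (left_mem_segment ℝ x y)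
    (right_mem_segment ℝ x y)
  calc f y - f x - f' x (y - x) ≤ ‖f y - f x - f' x (y - x)‖ := Real.le_norm_self _
    _ ≤ L * ‖y - x‖ * ‖y - x‖ := hmvt
    _ = L * ‖y - x‖ ^ 2 := by ring

theorem Convex.apply_add_smul_le_of_lipschitzOn (hK : Convex ℝ K)
    (hf : ∀ x ∈ K, HasFDerivWithinAt f (f' x) K x) (hL : 0 ≤ L)
    (hLip : ∀ x ∈ K, ∀ y ∈ K, ‖f' x - f' y‖ ≤ L * ‖x - y‖) {x v : E} (hx : x ∈ K)
    (hxv : x + v ∈ K) {t : ℝ} (ht : t ∈ Icc (0 : ℝ) 1) :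
    f (x + t • v) ≤ f x + t * f' x v + L * t ^ 2 * ‖v‖ ^ 2 := by
  have := hK.sub_sub_apply_le_of_lipschitzOn hf hL hLip hx (hK.add_smul_mem hx hxv ht)
  rw [add_sub_cancel_left, map_smul, smul_eq_mul, norm_smul, Real.norm_eq_abs, mul_pow,
    sq_abs] at this
  linarith

theorem Convex.min_le_pow_of_armijo_of_lipschitzOn (hK : Convex ℝ K)
    (hf : ∀ x ∈ K, HasFDerivWithinAt f (f' x) K x) (hL : 0 < L)
    (hLip : ∀ x ∈ K, ∀ y ∈ K, ‖f' x - f' y‖ ≤ L * ‖x - y‖) {x v : E} (hx : x ∈ K)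
    (hxv : x + v ∈ K) {c σ β : ℝ} {m : ℕ} (hσ1 : σ < 1) (hβ : 0 < β) (hβ1 : β < 1)
    (hd : f' x v ≤ -(c * ‖v‖ ^ 2))
    (hmin : ∀ n < m, ¬ f (x + β ^ n • v) ≤ f x + β ^ n * σ * f' x v) :
    min 1 (β * ((1 - σ) * c) / L) ≤ β ^ m :=
  min_le_pow_of_armijo (f := fun t => f (x + t • v)) (sq_nonneg _) hL hσ1 hβ hβ1 hd
    (fun _ ht => hK.apply_add_smul_le_of_lipschitzOn hf hL.le hLip hx hxv (Ioc_subset_Icc_self ht))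
    hmin

theorem apply_sub_nonneg_of_tendsto {ι : Type*} {l : Filter ι} [l.NeBot] {xs y : ι → E}
    {g : ι → E →L[ℝ] ℝ} {x η : E} {g₀ : E →L[ℝ] ℝ} {C : ℝ} (hx : Tendsto xs l (𝓝 x))
    (hxy : Tendsto (fun i => ‖y i - xs i‖) l (𝓝 0)) (hg : Tendsto g l (𝓝 g₀))
    (hle : ∀ i, -(C * (‖y i - xs i‖ * ‖η - y i‖)) ≤ g i (η - y i)) :
    0 ≤ g₀ (η - x) := by
  have hy : Tendsto y l (𝓝 x) := by
    simpa using hx.add (tendsto_zero_iff_norm_tendsto_zero.2 hxy)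
  have hηy : Tendsto (fun i => η - y i) l (𝓝 (η - x)) := tendsto_const_nhds.sub hy
  have hlower : Tendsto (fun i => -(C * (‖y i - xs i‖ * ‖η - y i‖))) l (𝓝 0) := by
    simpa using ((hxy.mul hηy.norm).const_mul C).neg
  have hupper : Tendsto (fun i => g i (η - y i)) l (𝓝 (g₀ (η - x))) :=
    (isBoundedBilinearMap_apply.continuous.tendsto _).comp (hg.prodMk_nhds hηy)
  exact le_of_tendsto_of_tendsto' hlower hupper hle

end

section ProjectionStep

variable {H : Type*} [NormedAddCommGroup H] [NormedSpace ℝ H] {K : Set H}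
  {a : H →ₗ[ℝ] H →ₗ[ℝ] ℝ} {lam : ℝ} {g : H →L[ℝ] ℝ} {x y : H}

/-- The functional whose minimizer over `K` is the projection-type step `P_k(x)`, for
`a = a_k`, `lam = λ_k` and `g = j'(x)`. -/
noncomputable def projObjective (a : H →ₗ[ℝ] H →ₗ[ℝ] ℝ) (lam : ℝ) (g : H →L[ℝ] ℝ) (x y : H) : ℝ :=
  1 / 2 * a (y - x) (y - x) + lam * g (y - x)

theorem projObjective_add_smul (ha : a.IsSymm) (x y w : H) (t : ℝ) :
    projObjective a lam g x (y + t • w) =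
      projObjective a lam g x y + (a (y - x) w + lam * g w) * t + a w w / 2 * t ^ 2 := by
  have hsymm : a w (y - x) = a (y - x) w := ha.eq w (y - x)
  simp only [projObjective, add_sub_right_comm y, map_add, map_smul, LinearMap.add_apply,
    LinearMap.smul_apply, smul_eq_mul, hsymm]
  ring

theorem IsMinOn.projObjective_variational_ineq (hK : Convex ℝ K) (ha : a.IsSymm)
    (hy : y ∈ K) (hmin : IsMinOn (projObjective a lam g x) K y) {z : H} (hz : z ∈ K) :
    0 ≤ a (y - x) (z - y) + lam * g (z - y) := by
  refine nonneg_of_forall_mul_add_mul_sq_nonneg (q := a (z - y) (z - y) / 2) fun t ht => ?_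
  have := isMinOn_iff.1 hmin _ (hK.add_smul_sub_mem hy hz ⟨ht.1.le, ht.2⟩)
  rw [projObjective_add_smul ha] at this
  linarith

theorem IsMinOn.projObjective_apply_sub_le (hx : x ∈ K)
    (hmin : IsMinOn (projObjective a lam g x) K y) {c₁ Λ : ℝ} (hc₁ : 0 ≤ c₁)
    (hcoer : ∀ p, c₁ * ‖p‖ ^ 2 ≤ a p p) (hlam : 0 < lam) (hΛ : lam ≤ Λ) :
    g (y - x) ≤ -(c₁ / (2 * Λ) * ‖y - x‖ ^ 2) := by
  have h0 := isMinOn_iff.1 hmin x hx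
  simp only [projObjective, sub_self, map_zero, mul_zero, add_zero] at h0
  have hcv := hcoer (y - x)
  have hlg : lam * g (y - x) ≤ -(c₁ / 2 * ‖y - x‖ ^ 2) := by linarith
  have hg : g (y - x) ≤ 0 := nonpos_of_mul_nonpos_right (hlg.trans (by
    simp only [neg_nonpos]; positivity)) hlam
  have hΛg : Λ * g (y - x) ≤ -(c₁ / 2 * ‖y - x‖ ^ 2) :=
    (mul_le_mul_of_nonpos_right hΛ hg).trans hlg
  rw [div_mul_eq_mul_div, ← neg_div, le_div_iff₀ (by linarith)]
  linarith

theorem LinearMap.apply_le_mul_norm_mul_norm (ha : a.IsSymm) (hpos : ∀ p, 0 ≤ a p p)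
    {c₂ : ℝ} (hc₂ : 0 ≤ c₂) (hbdd : ∀ p, a p p ≤ c₂ * ‖p‖ ^ 2) (p w : H) :
    a p w ≤ c₂ * ‖p‖ * ‖w‖ := by
  have hcs := (LinearMap.BilinForm.apply_sq_le_of_symm a hpos ha p w).trans
    (mul_le_mul (hbdd p) (hbdd w) (hpos w) (by positivity))
  exact (abs_le_of_sq_le_sq' (by linarith) (by positivity)).2

theorem IsMinOn.projObjective_apply_sub_ge (hK : Convex ℝ K) (ha : a.IsSymm) (hy : y ∈ K)
    (hmin : IsMinOn (projObjective a lam g x) K y) {c₂ Λ : ℝ} (hc₂ : 0 ≤ c₂)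
    (hpos : ∀ p, 0 ≤ a p p) (hbdd : ∀ p, a p p ≤ c₂ * ‖p‖ ^ 2) (hΛ : 0 < Λ) (hlam : Λ ≤ lam)
    {z : H} (hz : z ∈ K) :
    -(c₂ / Λ * (‖y - x‖ * ‖z - y‖)) ≤ g (z - y) := by
  have hvi := hmin.projObjective_variational_ineq hK ha hy hz
  have hcs := a.apply_le_mul_norm_mul_norm ha hpos hc₂ hbdd (y - x) (z - y)
  have hN : 0 ≤ c₂ * (‖y - x‖ * ‖z - y‖) := by positivity
  calc -(c₂ / Λ * (‖y - x‖ * ‖z - y‖)) ≤ -(c₂ * (‖y - x‖ * ‖z - y‖) / lam) := by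
        rw [div_mul_eq_mul_div]
        exact neg_le_neg (div_le_div_of_nonneg_left hN hΛ hlam)
    _ ≤ g (z - y) := by
        rw [← neg_div, div_le_iff₀ (hΛ.trans_le hlam)]
        linarith

end ProjectionStep

theorem stmt_17_general {H : Type*} [NormedAddCommGroup H] [InnerProductSpace ℝ H]
    (K : Set H) (hKcv : Convex ℝ K)
    -- j continuously Fréchet differentiable, bounded below on K, j' Lipschitz on K
    (j : H → ℝ) (j' : H → (H →L[ℝ] ℝ)) (hdiff : ∀ x, HasFDerivAt j (j' x) x)
    (hcont : Continuous j')
    (B : ℝ) (hbddbelow : ∀ x ∈ K, B ≤ j x)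
    (L : ℝ) (hLip : ∀ x ∈ K, ∀ y ∈ K, ‖j' x - j' y‖ ≤ L * ‖x - y‖)
    -- uniformly coercive and bounded symmetric bilinear forms a_k
    (a : ℕ → (H →ₗ[ℝ] H →ₗ[ℝ] ℝ)) (hsym : ∀ k p y, a k p y = a k y p)
    (c₁ c₂ : ℝ) (hc₁ : 0 < c₁) (hc₁₂ : c₁ ≤ c₂)
    (hcoer : ∀ k p, c₁ * ‖p‖ ^ 2 ≤ a k p p) (habdd : ∀ k p, a k p p ≤ c₂ * ‖p‖ ^ 2)
    -- scaling parameters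
    (lam : ℕ → ℝ) (lammin lammax : ℝ) (hlammin : 0 < lammin)
    (hlam : ∀ k, lammin ≤ lam k ∧ lam k ≤ lammax)
    -- Armijo parameters
    (σ β : ℝ) (hσ : 0 < σ) (hσ1 : σ < 1) (hβ : 0 < β) (hβ1 : β < 1)
    -- iterates, projection-type steps and search directions
    (φ φbar v : ℕ → H) (hφK : ∀ k, φ k ∈ K) (hφbarK : ∀ k, φbar k ∈ K)
    (hmin : ∀ k, ∀ y ∈ K,
      (1 / 2) * a k (φbar k - φ k) (φbar k - φ k) + lam k * j' (φ k) (φbar k - φ k) ≤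
      (1 / 2) * a k (y - φ k) (y - φ k) + lam k * j' (φ k) (y - φ k))
    (hv : ∀ k, v k = φbar k - φ k)
    -- Armijo backtracking: α_k = β^{m_k} with m_k minimal
    (m : ℕ → ℕ)
    (hArmijo : ∀ k, j (φ k + β ^ m k • v k) ≤ j (φ k) + β ^ m k * σ * j' (φ k) (v k))
    (hminimal : ∀ k, ∀ n < m k,
      ¬ (j (φ k + β ^ n • v k) ≤ j (φ k) + β ^ n * σ * j' (φ k) (v k)))
    (hiter : ∀ k, φ (k + 1) = φ k + β ^ m k • v k) :
    -- conclusion: every accumulation point in the norm topology is stationary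
    ∀ x : H, (∃ ψ : ℕ → ℕ, StrictMono ψ ∧ Tendsto (fun i => φ (ψ i)) atTop (𝓝 x)) →
      ∀ η ∈ K, 0 ≤ j' x (η - x) := by
  rintro x ⟨ψ, hψ, hφψ⟩ η hη
  have hsymm : ∀ k, (a k).IsSymm := fun k => LinearMap.isSymm_def.2 (hsym k)
  have ha_nonneg : ∀ k p, 0 ≤ a k p p := fun k p =>
    (by positivity : 0 ≤ c₁ * ‖p‖ ^ 2).trans (hcoer k p)
  have hstepK : ∀ k, IsMinOn (projObjective (a k) (lam k) (j' (φ k)) (φ k)) K (φbar k) :=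
    fun k => isMinOn_iff.2 (hmin k)
  have hφv : ∀ k, φ k + v k = φbar k := fun k => by rw [hv, add_sub_cancel]
  set c := c₁ / (2 * lammax)
  have hc : 0 < c := div_pos hc₁ (by linarith [(hlam 0).1, (hlam 0).2])
  have hdir : ∀ k, j' (φ k) (v k) ≤ -(c * ‖v k‖ ^ 2) := fun k => by
    simpa only [hv] using
      (hstepK k).projObjective_apply_sub_le (hφK k) hc₁.le (hcoer k)
        (hlammin.trans_le (hlam k).1) (hlam k).2
  set L' := max L 1
  have hLip' : ∀ x ∈ K, ∀ y ∈ K, ‖j' x - j' y‖ ≤ L' * ‖x - y‖ := fun x hx y hy =>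
    (hLip x hx y hy).trans (mul_le_mul_of_nonneg_right (le_max_left L 1) (norm_nonneg _))
  have hτ : 0 < min 1 (β * ((1 - σ) * c) / L') :=
    lt_min one_pos (by have := sub_pos.2 hσ1; positivity)
  have hstep : ∀ k, min 1 (β * ((1 - σ) * c) / L') ≤ β ^ m k := fun k =>
    hKcv.min_le_pow_of_armijo_of_lipschitzOn (fun z _ => (hdiff z).hasFDerivWithinAt)
      (by positivity) hLip' (hφK k) ((hφv k).symm ▸ hφbarK k) hσ1 hβ hβ1 (hdir k) (hminimal k)
  have hv0 : Tendsto (fun k => ‖v k‖) atTop (𝓝 0) :=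
    tendsto_zero_of_armijo_decrease hc hτ hσ (fun k => norm_nonneg _)
      ⟨B, forall_mem_range.2 fun k => hbddbelow _ (hφK k)⟩ hdir hstep
      (fun k => by rw [hiter k]; exact hArmijo k)
  exact apply_sub_nonneg_of_tendsto hφψ
    ((hv0.comp hψ.tendsto_atTop).congr fun i => by rw [Function.comp_apply, hv])
    ((hcont.tendsto x).comp hφψ) fun i =>
      (hstepK (ψ i)).projObjective_apply_sub_ge hKcv (hsymm _) (hφbarK _) (hc₁.le.trans hc₁₂)
        (ha_nonneg _) (habdd _) hlammin (hlam _).1 hη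

/-- global convergence of the variable metric projection type method in the
classical Hilbert space setting: every norm accumulation point of the iterates is a
stationary point of `j` on `K`. -/
theorem stmt_17 {H : Type*} [NormedAddCommGroup H] [InnerProductSpace ℝ H] [CompleteSpace H]
    (K : Set H) (hKne : K.Nonempty) (hKcl : IsClosed K) (hKcv : Convex ℝ K)
    -- j continuously Fréchet differentiable, bounded below on K, j' Lipschitz on K
    (j : H → ℝ) (j' : H → (H →L[ℝ] ℝ)) (hdiff : ∀ x, HasFDerivAt j (j' x) x)
    (hcont : Continuous j')
    (B : ℝ) (hbddbelow : ∀ x ∈ K, B ≤ j x)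
    (L : ℝ) (hLip : ∀ x ∈ K, ∀ y ∈ K, ‖j' x - j' y‖ ≤ L * ‖x - y‖)
    -- uniformly coercive and bounded symmetric bilinear forms a_k
    (a : ℕ → (H →ₗ[ℝ] H →ₗ[ℝ] ℝ)) (hsym : ∀ k p y, a k p y = a k y p)
    (c₁ c₂ : ℝ) (hc₁ : 0 < c₁) (hc₁₂ : c₁ ≤ c₂)
    (hcoer : ∀ k p, c₁ * ‖p‖ ^ 2 ≤ a k p p) (habdd : ∀ k p, a k p p ≤ c₂ * ‖p‖ ^ 2)
    -- scaling parameters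
    (lam : ℕ → ℝ) (lammin lammax : ℝ) (hlammin : 0 < lammin)
    (hlam : ∀ k, lammin ≤ lam k ∧ lam k ≤ lammax)
    -- Armijo parameters
    (σ β : ℝ) (hσ : 0 < σ) (hσ1 : σ < 1) (hβ : 0 < β) (hβ1 : β < 1)
    -- iterates, projection-type steps and search directions
    (φ φbar v : ℕ → H) (hφK : ∀ k, φ k ∈ K) (hφbarK : ∀ k, φbar k ∈ K)
    (hmin : ∀ k, ∀ y ∈ K,
      (1 / 2) * a k (φbar k - φ k) (φbar k - φ k) + lam k * j' (φ k) (φbar k - φ k) ≤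
      (1 / 2) * a k (y - φ k) (y - φ k) + lam k * j' (φ k) (y - φ k))
    (hv : ∀ k, v k = φbar k - φ k)
    -- Armijo backtracking: α_k = β^{m_k} with m_k minimal
    (m : ℕ → ℕ)
    (hArmijo : ∀ k, j (φ k + β ^ m k • v k) ≤ j (φ k) + β ^ m k * σ * j' (φ k) (v k))
    (hminimal : ∀ k, ∀ n < m k,
      ¬ (j (φ k + β ^ n • v k) ≤ j (φ k) + β ^ n * σ * j' (φ k) (v k)))
    (hiter : ∀ k, φ (k + 1) = φ k + β ^ m k • v k) :
    -- conclusion: every accumulation point in the norm topology is stationary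
    ∀ x : H, (∃ ψ : ℕ → ℕ, StrictMono ψ ∧ Tendsto (fun i => φ (ψ i)) atTop (𝓝 x)) →
      ∀ η ∈ K, 0 ≤ j' x (η - x) :=
  stmt_17_general K hKcv j j' hdiff hcont B hbddbelow L hLip a hsym c₁ c₂ hc₁ hc₁₂ hcoer habdd lam
    lammin lammax hlammin hlam σ β hσ hσ1 hβ hβ1 φ φbar v hφK hφbarK hmin hv m hArmijo hminimal
    hiter
end
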